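/- arXiv:0704.0910 — 9 statements merged into one kernel-verified Lean document; each statement's English description precedes it below -/
import Mathlib

section
/- If φ : A → B is an n-homomorphism between algebras (a linear map satisfying φ(a₁⋯aₙ) = φ(a₁)⋯φ(aₙ)), then for every k ≥ 1 the induced map φ_k : M_k(A) → M_k(B) on k×k matrices, given by applying φ entrywise, is also an n-homomorphism. -/
/-!
The `(i, j)` entry of a product of `m + 1` matrices is a sum, over index paths
`i → c₀ → ⋯ → c_{m-1} → j`, of `(m + 1)`-fold products of entries. A map that is additive and
multiplicative on `(m + 1)`-fold products therefore commutes with the matrix product entrywise.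
-/

/-- Product of a nonempty list of elements of a (possibly nonunital) multiplicative
structure: `nuProd x [a₁, …, aₘ] = x * a₁ * ⋯ * aₘ` (left-associated). -/
def nuProd {α : Type*} [Mul α] (x : α) (l : List α) : α := l.foldl (· * ·) x

theorem nuProd_ofFn_succ {α : Type*} [Mul α] (x : α) {m : ℕ} (g : Fin (m + 1) → α) :
    nuProd x (List.ofFn g)
      = nuProd x (List.ofFn fun t : Fin m => g t.castSucc) * g (Fin.last m) := by
  rw [List.ofFn_succ']
  simp [nuProd]

namespace Matrix

variable {ι α : Type*} [Fintype ι] [NonUnitalNonAssocSemiring α]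

theorem nuProd_ofFn_apply {m : ℕ} (M : Matrix ι ι α) (N : Fin m → Matrix ι ι α) (i j : ι) :
    nuProd M (List.ofFn N) i j
      = ∑ c : Fin m → ι, let p : Fin (m + 1) → ι := Fin.snoc c j
          nuProd (M i (p 0)) (List.ofFn fun t => N t (p t.castSucc) (p t.succ)) := by
  induction m generalizing j with
  | zero => simp [nuProd, Fin.snoc]
  | succ m ih =>
    rw [nuProd_ofFn_succ, mul_apply, ← (Fin.snocEquiv fun _ => ι).sum_comp,
      Fintype.sum_prod_type]
    refine Finset.sum_congr rfl fun x _ => ?_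
    rw [ih, Finset.sum_mul]
    refine Finset.sum_congr rfl fun c _ => ?_
    rw [nuProd_ofFn_succ]
    simp only [Fin.snocEquiv_apply, Fin.succ_castSucc, ← Fin.castSucc_zero, Fin.snoc_castSucc,
      Fin.succ_last, Fin.snoc_last]

theorem map_nuProd_ofFn {β F : Type*} [NonUnitalNonAssocSemiring β] [FunLike F α β]
    [AddMonoidHomClass F α β] {m : ℕ} (f : F)
    (hf : ∀ (x : α) (g : Fin m → α),
      f (nuProd x (List.ofFn g)) = nuProd (f x) (List.ofFn fun t => f (g t)))
    (M : Matrix ι ι α) (N : Fin m → Matrix ι ι α) :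
    (nuProd M (List.ofFn N)).map f = nuProd (M.map f) (List.ofFn fun t => (N t).map f) := by
  ext i j
  simp only [map_apply, nuProd_ofFn_apply, map_sum, hf]

end Matrix

theorem matrix_map_nhom_general {A B : Type*}
    [NonUnitalRing A] [Module ℂ A]
    [NonUnitalRing B] [Module ℂ B]
    (n k : ℕ) (φ : A →ₗ[ℂ] B)
    (hmul : ∀ (x : A) (f : Fin (n - 1) → A),
      φ (nuProd x (List.ofFn f)) = nuProd (φ x) (List.ofFn fun i => φ (f i))) :
    ∀ (M : Matrix (Fin k) (Fin k) A) (F : Fin (n - 1) → Matrix (Fin k) (Fin k) A),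
      (nuProd M (List.ofFn F)).map φ
        = nuProd (M.map φ) (List.ofFn fun i => (F i).map φ) :=
  Matrix.map_nuProd_ofFn φ hmul

/-- If `φ : A → B` is an `n`-homomorphism between (complex) algebras, then for every
`k ≥ 1` the entrywise induced map on `k × k` matrices is again an `n`-homomorphism. -/
theorem matrix_map_nhom {A B : Type*}
    [NonUnitalRing A] [Module ℂ A] [SMulCommClass ℂ A A] [IsScalarTower ℂ A A]
    [NonUnitalRing B] [Module ℂ B] [SMulCommClass ℂ B B] [IsScalarTower ℂ B B]
    (n k : ℕ) (hn : 2 ≤ n) (hk : 1 ≤ k) (φ : A →ₗ[ℂ] B)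
    (hmul : ∀ (x : A) (f : Fin (n - 1) → A),
      φ (nuProd x (List.ofFn f)) = nuProd (φ x) (List.ofFn fun i => φ (f i))) :
    ∀ (M : Matrix (Fin k) (Fin k) A) (F : Fin (n - 1) → Matrix (Fin k) (Fin k) A),
      (nuProd M (List.ofFn F)).map φ
        = nuProd (M.map φ) (List.ofFn fun i => (F i).map φ) :=
  matrix_map_nhom_general n k φ hmul
end

section
/- Let φ : A → B be an involutive n-homomorphism between C*-algebras with n = 2k even. Then φ is a positive map: for every a ∈ A there exists b ∈ B with φ(a*a) = b*b. -/
/-!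
Write `p = a⋆a`. It is positive, so the continuous functional calculus gives a positive
`q = p ^ (1 / 2k)` whose `2k`-fold product is `p`. Hence `φ p` is the `2k`-fold product of the
self-adjoint element `φ q`, which is `b⋆b` for `b` the `k`-fold product of `φ q`.
-/

open List NNReal

section Semigroup

variable {α : Type*} [Semigroup α]

lemma nuProd_cons (x y : α) (l : List α) : nuProd x (y :: l) = x * nuProd y l := by
  simp only [nuProd, foldl_cons]
  exact foldl_assoc

lemma nuProd_replicate_succ (x : α) (m : ℕ) :
    nuProd x (replicate (m + 1) x) = x * nuProd x (replicate m x) := by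
  rw [replicate_succ, nuProd_cons]

lemma nuProd_replicate_add (x : α) (m n : ℕ) :
    nuProd x (replicate (m + n + 1) x) = nuProd x (replicate m x) * nuProd x (replicate n x) := by
  induction m with
  | zero => simpa [nuProd] using nuProd_replicate_succ x n
  | succ m ih =>
    rw [show m + 1 + n + 1 = m + n + 1 + 1 by omega, nuProd_replicate_succ, ih,
      nuProd_replicate_succ, mul_assoc]

lemma IsSelfAdjoint.nuProd_replicate [StarMul α] {x : α} (hx : IsSelfAdjoint x) (m : ℕ) :
    IsSelfAdjoint (nuProd x (replicate m x)) := by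
  induction m with
  | zero => exact hx
  | succ m ih =>
    rw [IsSelfAdjoint, nuProd_replicate_succ, star_mul, ih.star_eq, hx.star_eq]
    exact (nuProd_replicate_add x m 0).symm.trans (nuProd_replicate_succ x m)

lemma IsSelfAdjoint.nuProd_replicate_two_mul_add_one [StarMul α] {x : α} (hx : IsSelfAdjoint x)
    (m : ℕ) :
    nuProd x (replicate (2 * m + 1) x) =
      star (nuProd x (replicate m x)) * nuProd x (replicate m x) := by
  rw [(hx.nuProd_replicate m).star_eq, two_mul, nuProd_replicate_add]

end Semigroup

namespace CFC

variable {A : Type*} [PartialOrder A] [NonUnitalRing A] [TopologicalSpace A] [StarRing A]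
  [Module ℝ A] [SMulCommClass ℝ A A] [IsScalarTower ℝ A A] [StarOrderedRing A]
  [NonUnitalContinuousFunctionalCalculus ℝ A IsSelfAdjoint] [NonnegSpectrumClass ℝ A]

lemma nuProd_replicate_nnrpow (a : A) {t : ℝ≥0} (ht : 0 < t) (m : ℕ) :
    nuProd (a ^ t) (replicate m (a ^ t)) = a ^ ((m + 1) * t) := by
  induction m with
  | zero => simp [nuProd]
  | succ m ih =>
    rw [nuProd_replicate_succ, ih, ← nnrpow_add ht (by positivity)]
    congr 1
    push_cast
    ring

lemma exists_nonneg_nuProd_replicate_eq {a : A} (ha : 0 ≤ a) (m : ℕ) :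
    ∃ q : A, 0 ≤ q ∧ nuProd q (replicate m q) = a := by
  refine ⟨a ^ ((m : ℝ≥0) + 1)⁻¹, nnrpow_nonneg, ?_⟩
  rw [nuProd_replicate_nnrpow a (by positivity), mul_inv_cancel₀ (by positivity),
    nnrpow_one a ha]

end CFC

theorem even_nhom_positive_general {A B : Type*}
    [NonUnitalNormedRing A] [StarRing A] [CStarRing A] [CompleteSpace A]
    [NormedSpace ℂ A] [IsScalarTower ℂ A A] [SMulCommClass ℂ A A] [StarModule ℂ A]
    [NonUnitalNormedRing B] [StarRing B] [NormedSpace ℂ B]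
    (k : ℕ) (hk : 1 ≤ k) (φ : A →ₗ[ℂ] B)
    (hmul : ∀ (x : A) (f : Fin (2 * k - 1) → A),
      φ (nuProd x (List.ofFn f)) = nuProd (φ x) (List.ofFn fun i => φ (f i)))
    (hstar : ∀ a : A, φ (star a) = star (φ a)) :
    ∀ a : A, ∃ b : B, φ (star a * a) = star b * b := by
  let _ : NonUnitalCStarAlgebra A := { }
  let _ := CStarAlgebra.spectralOrder A
  have := CStarAlgebra.spectralOrderedRing A
  intro a
  obtain ⟨q, hq_nonneg, hq⟩ :=
    CFC.exists_nonneg_nuProd_replicate_eq (star_mul_self_nonneg a) (2 * k - 1)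
  have hφq : IsSelfAdjoint (φ q) := by rw [IsSelfAdjoint, ← hstar, hq_nonneg.isSelfAdjoint.star_eq]
  refine ⟨nuProd (φ q) (replicate (k - 1) (φ q)), ?_⟩
  have hφp := hmul q fun _ => q
  rw [ofFn_const, hq, ofFn_const, show 2 * k - 1 = 2 * (k - 1) + 1 by omega] at hφp
  rw [hφp, hφq.nuProd_replicate_two_mul_add_one]

/-- An involutive `n`-homomorphism between C*-algebras with `n = 2k` even is a positive
map: `φ(a*a)` is of the form `b*b`. -/
theorem even_nhom_positive {A B : Type*}
    [NonUnitalNormedRing A] [StarRing A] [CStarRing A] [CompleteSpace A]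
    [NormedSpace ℂ A] [IsScalarTower ℂ A A] [SMulCommClass ℂ A A] [StarModule ℂ A]
    [NonUnitalNormedRing B] [StarRing B] [CStarRing B] [CompleteSpace B]
    [NormedSpace ℂ B] [IsScalarTower ℂ B B] [SMulCommClass ℂ B B] [StarModule ℂ B]
    (k : ℕ) (hk : 1 ≤ k) (φ : A →ₗ[ℂ] B)
    (hmul : ∀ (x : A) (f : Fin (2 * k - 1) → A),
      φ (nuProd x (List.ofFn f)) = nuProd (φ x) (List.ofFn fun i => φ (f i)))
    (hstar : ∀ a : A, φ (star a) = star (φ a)) :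
    ∀ a : A, ∃ b : B, φ (star a * a) = star b * b :=
  even_nhom_positive_general k hk φ hmul hstar
end

section
/- Let φ : A → B be a bounded involutive n-homomorphism between C*-algebras, n ≥ 2. Then ‖φ‖ ≤ 1, i.e., ‖φ(x)‖ ≤ ‖x‖ for all x ∈ A. -/
open Filter Function

lemma le_of_frequently_pow_le_mul {a b C : ℝ} (hb : 0 ≤ b)
    (h : ∃ᶠ m in atTop, a ^ m ≤ C * b ^ m) : a ≤ b := by
  by_contra! hba
  suffices ∀ᶠ m in atTop, C * b ^ m < a ^ m from h (this.mono fun _ => not_le.2)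
  rcases hb.eq_or_lt with rfl | hb
  · filter_upwards [eventually_gt_atTop 0] with m hm
    simpa [zero_pow hm.ne'] using pow_pos hba m
  · have hab : 1 < a / b := (one_lt_div hb).2 hba
    filter_upwards [(tendsto_pow_atTop_atTop_of_one_lt hab).eventually_gt_atTop C] with m hm
    rwa [div_pow, lt_div_iff₀ (pow_pos hb m)] at hm

lemma nuProd_mul_left {E : Type*} [Semigroup E] (x y : E) (l : List E) :
    nuProd (x * y) l = x * nuProd y l := by
  induction l generalizing y with
  | nil => rfl
  | cons a l ih => exact (congrArg (nuProd · l) (mul_assoc x y a)).trans (ih (y * a))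

section altWord

variable {E : Type*}

/-- The alternating word `z⋆ * z * z⋆ * ⋯` with `N + 1` factors, the parity of `i` deciding
whether `star^[i] z` is `z` or `z⋆`. -/
def altWord [Mul E] [Star E] (z : E) (N : ℕ) : E :=
  nuProd (star z) (List.ofFn fun i : Fin N => star^[i] z)

lemma altWord_zero [Mul E] [Star E] (z : E) : altWord z 0 = star z := rfl

lemma map_altWord [Mul E] [Star E] {F : Type*} [Mul F] [Star F] {f : E → F} {N : ℕ}
    (hmul : ∀ (x : E) (g : Fin N → E),
      f (nuProd x (List.ofFn g)) = nuProd (f x) (List.ofFn fun i => f (g i)))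
    (hstar : ∀ a, f (star a) = star (f a)) (z : E) :
    f (altWord z N) = altWord (f z) N := by
  simp only [altWord, hmul, hstar, (Semiconj.iterate_right (f := f) hstar _).eq]

section StarMul

variable [Semigroup E] [StarMul E]

lemma altWord_succ (z : E) (N : ℕ) : altWord z (N + 1) = star z * altWord (star z) N := by
  simp only [altWord, List.ofFn_succ, Fin.val_zero, iterate_zero_apply, Fin.val_succ,
    iterate_succ_apply, star_star]
  exact nuProd_mul_left _ _ _

lemma altWord_add (z : E) (N M : ℕ) :
    altWord z (N + M + 1) = altWord z N * altWord (star^[N + 1] z) M := by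
  induction N generalizing z with
  | zero => rw [zero_add, altWord_succ]; rfl
  | succ N ih =>
    rw [show N + 1 + M + 1 = N + M + 1 + 1 by omega, altWord_succ, ih, altWord_succ, mul_assoc,
      ← iterate_succ_apply]

lemma altWord_succ_eq_mul (z : E) (N : ℕ) : altWord z (N + 1) = altWord z N * star^[N + 2] z := by
  rw [altWord_add z N 0, altWord_zero, ← iterate_succ_apply' star]

lemma star_altWord (z : E) (N : ℕ) : star (altWord z N) = altWord (star^[N + 1] z) N := by
  induction N generalizing z with
  | zero => rfl
  | succ N ih =>
    rw [altWord_succ, star_mul, ih, star_star, altWord_succ_eq_mul, ← iterate_succ_apply,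
      ← iterate_add_apply, ← two_mul, star_involutive.iterate_two_mul, id]

lemma altWord_two_mul_add_one (z : E) (N : ℕ) :
    altWord z (2 * N + 1) = altWord z N * star (altWord z N) := by
  rw [two_mul, altWord_add, star_altWord]

end StarMul

end altWord

section Norm

variable {E : Type*}

lemma norm_iterate_star [SeminormedAddCommGroup E] [StarAddMonoid E] [NormedStarGroup E]
    (z : E) (k : ℕ) : ‖star^[k] z‖ = ‖z‖ := by
  induction k with
  | zero => rfl
  | succ k ih => rw [iterate_succ_apply', norm_star, ih]

variable [NonUnitalSeminormedRing E] [StarRing E] [NormedStarGroup E]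

lemma norm_altWord_le (z : E) (N : ℕ) : ‖altWord z N‖ ≤ ‖z‖ ^ (N + 1) := by
  induction N generalizing z with
  | zero => rw [altWord_zero, norm_star, pow_one]
  | succ N ih =>
    calc ‖altWord z (N + 1)‖ ≤ ‖star z‖ * ‖altWord (star z) N‖ := by
          rw [altWord_succ]; exact norm_mul_le _ _
      _ ≤ ‖z‖ * ‖z‖ ^ (N + 1) := by
          rw [norm_star]; gcongr; simpa only [norm_star] using ih (star z)
      _ = ‖z‖ ^ (N + 1 + 1) := (pow_succ' _ _).symm

lemma norm_altWord_succ_le (z : E) (N : ℕ) : ‖altWord z (N + 1)‖ ≤ ‖altWord z N‖ * ‖z‖ := by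
  rw [altWord_succ_eq_mul, ← norm_iterate_star z (N + 2)]
  exact norm_mul_le _ _

end Norm

section CStarRing

variable {E : Type*} [NonUnitalNormedRing E] [StarRing E] [CStarRing E]

lemma norm_altWord_two_mul_add_one (z : E) (N : ℕ) :
    ‖altWord z (2 * N + 1)‖ = ‖altWord z N‖ ^ 2 := by
  rw [altWord_two_mul_add_one, CStarRing.norm_self_mul_star, sq]

lemma norm_altWord (z : E) (N : ℕ) : ‖altWord z N‖ = ‖z‖ ^ (N + 1) := by
  induction N using Nat.strong_induction_on with
  | _ N ih =>
  obtain ⟨M, rfl | rfl⟩ := Nat.even_or_odd' N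
  · rcases M.eq_zero_or_pos with rfl | hM
    · rw [altWord_zero, norm_star, pow_one]
    refine le_antisymm (norm_altWord_le z _) ?_
    have h : ‖z‖ ^ (2 * M + 1) * ‖z‖ ≤ ‖altWord z (2 * M)‖ * ‖z‖ :=
      calc ‖z‖ ^ (2 * M + 1) * ‖z‖ = ‖altWord z M‖ ^ 2 := by
            rw [ih M (by omega), ← pow_succ, ← pow_mul]; ring_nf
        _ = ‖altWord z (2 * M + 1)‖ := (norm_altWord_two_mul_add_one z M).symm
        _ ≤ ‖altWord z (2 * M)‖ * ‖z‖ := norm_altWord_succ_le z _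
    rcases (norm_nonneg z).eq_or_lt with hz | hz
    · rw [← hz, zero_pow (by omega)]; exact norm_nonneg _
    · exact le_of_mul_le_mul_right h hz
  · rw [norm_altWord_two_mul_add_one, ih M (by omega), ← pow_mul]; ring_nf

end CStarRing

lemma norm_pow_pow_le_of_map_altWord {E F : Type*}
    [NonUnitalSeminormedRing E] [StarRing E] [NormedStarGroup E]
    [NonUnitalNormedRing F] [StarRing F] [CStarRing F] {f : E → F} {N : ℕ} {C : ℝ}
    (hC : 0 ≤ C) (hfC : ∀ x, ‖f x‖ ≤ C * ‖x‖) (hf : ∀ x, f (altWord x N) = altWord (f x) N)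
    (k : ℕ) (x : E) : ‖f x‖ ^ (N + 1) ^ k ≤ C * ‖x‖ ^ (N + 1) ^ k := by
  induction k generalizing x with
  | zero => simpa using hfC x
  | succ k ih =>
    calc ‖f x‖ ^ (N + 1) ^ (k + 1) = ‖f (altWord x N)‖ ^ (N + 1) ^ k := by
          rw [hf, norm_altWord, ← pow_mul, pow_succ']
      _ ≤ C * ‖altWord x N‖ ^ (N + 1) ^ k := ih _
      _ ≤ C * ‖x‖ ^ (N + 1) ^ (k + 1) := by
          rw [pow_succ', pow_mul]; gcongr; exact norm_altWord_le x N

theorem bounded_involutive_nhom_contractive_general {A B : Type*}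
    [NonUnitalNormedRing A] [StarRing A] [CStarRing A] [NormedSpace ℂ A]
    [NonUnitalNormedRing B] [StarRing B] [CStarRing B] [NormedSpace ℂ B]
    (n : ℕ) (hn : 2 ≤ n) (φ : A →L[ℂ] B)
    (hmul : ∀ (x : A) (f : Fin (n - 1) → A),
      φ (nuProd x (List.ofFn f)) = nuProd (φ x) (List.ofFn fun i => φ (f i)))
    (hstar : ∀ a : A, φ (star a) = star (φ a)) :
    ∀ x : A, ‖φ x‖ ≤ ‖x‖ := by
  intro x
  have hpow := norm_pow_pow_le_of_map_altWord (norm_nonneg φ) φ.le_opNorm (map_altWord hmul hstar)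
  rw [Nat.sub_add_cancel (by omega : 1 ≤ n)] at hpow
  exact le_of_frequently_pow_le_mul (norm_nonneg x) <|
    (tendsto_pow_atTop_atTop_of_one_lt (by omega : 1 < n)).frequently
      (Frequently.of_forall fun k => hpow k x)

/-- A bounded involutive `n`-homomorphism between C*-algebras (`n ≥ 2`) is norm
contractive: `‖φ(x)‖ ≤ ‖x‖` for all `x`. -/
theorem bounded_involutive_nhom_contractive {A B : Type*}
    [NonUnitalNormedRing A] [StarRing A] [CStarRing A] [CompleteSpace A]
    [NormedSpace ℂ A] [IsScalarTower ℂ A A] [SMulCommClass ℂ A A] [StarModule ℂ A]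
    [NonUnitalNormedRing B] [StarRing B] [CStarRing B] [CompleteSpace B]
    [NormedSpace ℂ B] [IsScalarTower ℂ B B] [SMulCommClass ℂ B B] [StarModule ℂ B]
    (n : ℕ) (hn : 2 ≤ n) (φ : A →L[ℂ] B)
    (hmul : ∀ (x : A) (f : Fin (n - 1) → A),
      φ (nuProd x (List.ofFn f)) = nuProd (φ x) (List.ofFn fun i => φ (f i)))
    (hstar : ∀ a : A, φ (star a) = star (φ a)) :
    ∀ x : A, ‖φ x‖ ≤ ‖x‖ :=
  bounded_involutive_nhom_contractive_general n hn φ hmul hstar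
end

section
/- Let A be a C*-algebra, a ∈ A, k ≥ 1, and λ a nonzero scalar. Then λ ∈ σ((a*a)^k) if and only if there does not exist c ∈ A with c(λ·1 − (a*a)^k) = a (the product interpreted in the unitization of A). -/
/-!
If `c (λ - b ^ k) = a` with `b = a⋆a`, then `b = u⋆ (c⋆c) u` for `u = λ - b ^ k`, so
`b ≤ ‖c⋆c‖ u⋆u`. Both sides are continuous functions of the positive element `b`, hence
`μ ≤ ‖c⋆c‖ |λ - μ ^ k|²` for every `μ ∈ σ(b)`. A `μ ∈ σ(b)` with `μ ^ k = λ` then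
satisfies `0 ≤ μ ≤ 0`, contradicting `λ ≠ 0`. Conversely, if `λ - b ^ k` is invertible
then `c = a (λ - b ^ k)⁻¹` works, and it lies in `A` because `A` is an ideal of its unitization.
-/

open ComplexOrder in
theorem CStarAlgebra.mul_sub_pow_star_mul_self_ne_of_mem_spectrum {B : Type*} [CStarAlgebra B]
    [PartialOrder B] [StarOrderedRing B] {k : ℕ} (hk : k ≠ 0) {lam : ℂ} (hlam : lam ≠ 0)
    {x : B} (hmem : lam ∈ spectrum ℂ ((star x * x) ^ k)) (c : B) :
    c * (algebraMap ℂ B lam - (star x * x) ^ k) ≠ x := by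
  intro hc
  set b := star x * x with hb
  have hb_nonneg : 0 ≤ b := star_mul_self_nonneg x
  have hb_normal : IsStarNormal b := hb_nonneg.isSelfAdjoint.isStarNormal
  set u := algebraMap ℂ B lam - b ^ k
  have hu : u = cfc (fun z : ℂ => lam - z ^ k) b := by
    rw [cfc_sub _ _ b, cfc_const lam b, cfc_pow_id b k]
  have hle : b ≤ ‖star c * c‖ • (star u * u) :=
    calc b = star u * (star c * c) * u := by rw [hb, ← hc, star_mul]; simp only [mul_assoc]
      _ ≤ _ := CStarAlgebra.star_left_conjugate_le_norm_smul
  have hu_cfc : ‖star c * c‖ • (star u * u) =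
      cfc (fun z : ℂ => (‖star c * c‖ : ℂ) * (star (lam - z ^ k) * (lam - z ^ k))) b := by
    rw [hu, ← cfc_star, ← cfc_mul .., cfc_const_mul .., Complex.coe_smul]
  rw [hu_cfc] at hle
  nth_rw 1 [← cfc_id' ℂ b] at hle
  rw [cfc_le_iff (fun z : ℂ => z) _ b] at hle
  obtain ⟨μ, hμ, rfl⟩ : ∃ μ ∈ spectrum ℂ b, μ ^ k = lam := by
    rwa [← cfc_pow_id (R := ℂ) b k, cfc_map_spectrum (f := (· ^ k)) (a := b)] at hmem
  have hμ_nonneg : 0 ≤ μ := spectrum_nonneg_of_nonneg hb_nonneg hμ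
  have hμ_nonpos : μ ≤ 0 := by simpa using hle μ hμ
  exact hlam (by rw [le_antisymm hμ_nonpos hμ_nonneg, zero_pow hk])

theorem Unitization.exists_inr_mul_eq_of_isUnit {R A : Type*} [CommRing R] [NonUnitalRing A]
    [Module R A] [IsScalarTower R A A] [SMulCommClass R A A] {u : Unitization R A}
    (hu : IsUnit u) (x : A) : ∃ c : A, (c : Unitization R A) * u = x := by
  lift (x : Unitization R A) * ↑hu.unit⁻¹ to A using (by simp [fst_mul]) with c hc
  exact ⟨c, by rw [hc, mul_assoc, hu.val_inv_mul, mul_one]⟩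

/-- Harris' lemma: in a (possibly nonunital) C*-algebra `A`, for `λ ≠ 0` and `k ≥ 1`,
`λ ∈ σ((a*a)^k)` (spectrum computed in the unitization) iff there is no `c ∈ A` with
`c (λ·1 − (a*a)^k) = a` (product in the unitization). -/
theorem harris_lemma {A : Type*}
    [NonUnitalNormedRing A] [StarRing A] [CStarRing A] [CompleteSpace A]
    [NormedSpace ℂ A] [IsScalarTower ℂ A A] [SMulCommClass ℂ A A] [StarModule ℂ A]
    (k : ℕ) (hk : 1 ≤ k) (a : A) (lam : ℂ) (hlam : lam ≠ 0) :
    lam ∈ spectrum ℂ (((star a * a : A) : Unitization ℂ A) ^ k) ↔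
      ¬∃ c : A, (c : Unitization ℂ A) *
          (algebraMap ℂ (Unitization ℂ A) lam - ((star a * a : A) : Unitization ℂ A) ^ k)
        = (a : Unitization ℂ A) := by
  let : NonUnitalCStarAlgebra A :=
    { ‹NonUnitalNormedRing A›, ‹StarRing A›, ‹CStarRing A›, ‹NormedSpace ℂ A› with
      complete := ‹CompleteSpace A›.complete
      smul_assoc := smul_assoc
      smul_comm := smul_comm
      star_smul := star_smul }
  rw [Unitization.inr_mul, Unitization.inr_star]
  refine ⟨fun hmem ⟨c, hc⟩ ↦ ?_, fun h ↦ not_not.mp fun hmem ↦ h ?_⟩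
  · exact CStarAlgebra.mul_sub_pow_star_mul_self_ne_of_mem_spectrum (by omega) hlam hmem c hc
  · exact Unitization.exists_inr_mul_eq_of_isUnit (spectrum.notMem_iff.mp hmem) a
end

section
/- Let φ : A → B be an involutive n-homomorphism between C*-algebras with n = 2k+1 odd, k ≥ 1. Then for every a ∈ A, σ((φ(a)*φ(a))^k) ⊆ σ((a*a)^k) ∪ {0}. -/
/-!
Write `T = (a⋆a)ᵏ = x * l₁ * ⋯ * lₘ * e` as a word of `2k` letters and `S = (φ(a)⋆φ(a))ᵏ` for the
word of their images. Outside `0`, both spectra are governed by quasiregularity, so it suffices to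
transport a quasi-inverse `y` of `T` to one of `S`. Since `y = -(T + T y)`, `y` is again a word of
`2k` letters, and its image `y'` is the candidate. Multiplying a word of `2k` images by one more
image `φ v` collapses, by `(2k+1)`-multiplicativity, to `φ` of the product, so the quasi-inverse
equations for `y'` hold after right multiplication by every `φ v`. An element `D` that is a sum of
terms `b * φ e` and is annihilated on the right by all `φ v` satisfies `D * D⋆ = 0`, because
`φ` commutes with `⋆`; the C⋆-identity then gives `D = 0`.
-/

section NuProd

variable {α : Type*}

lemma nuProd_append [Mul α] (x : α) (l₁ l₂ : List α) :
    nuProd x (l₁ ++ l₂) = nuProd (nuProd x l₁) l₂ :=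
  List.foldl_append

lemma nuProd_neg [NonUnitalNonAssocRing α] (x : α) (l : List α) :
    nuProd (-x) l = -nuProd x l := by
  induction l generalizing x with
  | nil => rfl
  | cons y l ih => exact (congrArg (nuProd · l) (neg_mul x y)).trans (ih (x * y))

lemma smul_nuProd {R : Type*} [Mul α] [SMul R α] [IsScalarTower R α α]
    (r : R) (x : α) (l : List α) : nuProd (r • x) l = r • nuProd x l := by
  induction l generalizing x with
  | nil => rfl
  | cons y l ih => exact (congrArg (nuProd · l) (smul_mul_assoc r x y)).trans (ih (x * y))

lemma map_nuProd {β : Type*} [Mul α] [Mul β] (F : α → β) (hF : ∀ p q, F (p * q) = F p * F q)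
    (x : α) (l : List α) : F (nuProd x l) = nuProd (F x) (l.map F) := by
  induction l generalizing x with
  | nil => rfl
  | cons y l ih => exact (ih (x * y)).trans (congrArg (nuProd · _) (hF x y))

def rep2 : ℕ → α → α → List α
  | 0, _, _ => []
  | m + 1, p, q => p :: q :: rep2 m p q

lemma length_rep2 (m : ℕ) (p q : α) : (rep2 m p q).length = 2 * m := by
  induction m with
  | zero => rfl
  | succ m ih => simp only [rep2, List.length_cons, ih]; ring

lemma map_rep2 {β : Type*} (F : α → β) (m : ℕ) (p q : α) :
    (rep2 m p q).map F = rep2 m (F p) (F q) := by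
  induction m with
  | zero => rfl
  | succ m ih => simp only [rep2, List.map_cons, ih]

lemma nuProd_rep2 {M : Type*} [Monoid M] (m : ℕ) (x p q : M) :
    nuProd x (rep2 m p q) = x * (p * q) ^ m := by
  induction m generalizing x with
  | zero => rw [pow_zero, mul_one]; rfl
  | succ m ih => exact (ih (x * p * q)).trans (by rw [pow_succ']; simp only [mul_assoc])

lemma inr_nuProd_rep2_mul {R A : Type*} [CommSemiring R] [NonUnitalSemiring A] [Module R A]
    [IsScalarTower R A A] [SMulCommClass R A A] (m : ℕ) (p q : A) :
    ((nuProd q (rep2 m p q) * p : A) : Unitization R A) =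
      ((q * p : A) : Unitization R A) ^ (m + 1) := by
  rw [Unitization.inr_mul, map_nuProd _ (Unitization.inr_mul R), map_rep2, nuProd_rep2,
    mul_assoc, mul_pow_mul, ← mul_assoc, ← pow_succ', Unitization.inr_mul]

end NuProd

section Multiplicative

variable {A B : Type*}

def PreservesNuProd [Mul A] [Mul B] (φ : A → B) (n : ℕ) : Prop :=
  ∀ (x : A) (l : List A), l.length = n → φ (nuProd x l) = nuProd (φ x) (l.map φ)

lemma preservesNuProd_of_ofFn [Mul A] [Mul B] {φ : A → B} {n : ℕ}
    (h : ∀ (x : A) (f : Fin n → A),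
      φ (nuProd x (List.ofFn f)) = nuProd (φ x) (List.ofFn fun i => φ (f i))) :
    PreservesNuProd φ n := by
  rintro x l rfl
  simpa only [List.ofFn_getElem, List.ofFn_getElem_eq_map] using h x (fun i => l[(i : ℕ)])

lemma eq_zero_of_mul_map_eq_zero [Star A] [NonUnitalNormedRing B] [StarRing B] [CStarRing B]
    (φ : A → B) (hstar : ∀ a, φ (star a) = star (φ a)) {D : B}
    (hmem : D ∈ AddSubmonoid.closure (Set.range fun p : B × A => p.1 * φ p.2))
    (hD : ∀ v, D * φ v = 0) : D = 0 := by
  have hperp : ∀ E ∈ AddSubmonoid.closure (Set.range fun p : B × A => p.1 * φ p.2),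
      D * star E = 0 := by
    intro E hE
    induction hE using AddSubmonoid.closure_induction with
    | mem _ h =>
      obtain ⟨⟨b, e⟩, rfl⟩ := h
      rw [star_mul, ← hstar, ← mul_assoc, hD, zero_mul]
    | zero => rw [star_zero, mul_zero]
    | add E₁ E₂ _ _ h₁ h₂ => rw [star_add, mul_add, h₁, h₂, add_zero]
  exact CStarRing.mul_star_self_eq_zero_iff D |>.mp (hperp D hmem)

lemma PreservesNuProd.isQuasiregular_map [NonUnitalRing A] [Star A] [NonUnitalNormedRing B]
    [StarRing B] [CStarRing B] {φ : A →+ B} {x e : A} {l : List A}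
    (hφ : PreservesNuProd φ (l.length + 2)) (hstar : ∀ a, φ (star a) = star (φ a))
    (h : IsQuasiregular (nuProd x l * e)) :
    IsQuasiregular (nuProd (φ x) (l.map φ) * φ e) := by
  set T := nuProd x l * e
  set S := nuProd (φ x) (l.map φ) * φ e
  obtain ⟨y, hy₁, hy₂⟩ := isQuasiregular_iff.mp h
  have collapse : ∀ x' e' v : A,
      nuProd (φ x') (l.map φ) * φ e' * φ v = φ (nuProd x' l * e' * v) := by
    intro x' e' v
    have := hφ x' (l ++ [e', v]) (by simp)
    rw [List.map_append, nuProd_append, nuProd_append] at this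
    exact this.symm
  have hy : nuProd (-x) l * (e + e * y) = y := by
    rw [nuProd_neg, neg_mul, mul_add, ← mul_assoc]
    exact (eq_neg_of_add_eq_zero_left ((add_assoc _ _ _).symm.trans hy₁)).symm
  set y' := nuProd (φ (-x)) (l.map φ) * φ (e + e * y)
  have hy' : ∀ v, y' * φ v = φ (y * v) := fun v => by rw [collapse, hy]
  have hS : ∀ v, S * φ v = φ (T * v) := collapse x e
  have hmem : ∀ b e', b * φ e' ∈ AddSubmonoid.closure (Set.range fun p : B × A => p.1 * φ p.2) :=
    fun b e' => AddSubmonoid.subset_closure ⟨(b, e'), rfl⟩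
  refine isQuasiregular_iff.mpr ⟨y', ?_, ?_⟩
  · refine eq_zero_of_mul_map_eq_zero φ hstar ?_ fun v => ?_
    · exact add_mem (add_mem (hmem _ _) (hmem _ _)) (by rw [← mul_assoc]; exact hmem _ _)
    · rw [add_mul, add_mul, mul_assoc S y', hy', hS, hS, ← mul_assoc, ← map_add, ← map_add,
        ← add_mul, ← add_mul, hy₁, zero_mul, map_zero]
  · refine eq_zero_of_mul_map_eq_zero φ hstar ?_ fun v => ?_
    · exact add_mem (add_mem (hmem _ _) (hmem _ _)) (by rw [← mul_assoc]; exact hmem _ _)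
    · rw [add_mul, add_mul, mul_assoc y' S, hS, hy', hy', ← mul_assoc, ← map_add, ← map_add,
        ← add_mul, ← add_mul, hy₂, zero_mul, map_zero]

lemma PreservesNuProd.quasispectrum_map_subset {R : Type*} [CommRing R] [NonUnitalRing A]
    [Star A] [Module R A] [IsScalarTower R A A] [NonUnitalNormedRing B] [StarRing B]
    [CStarRing B] [Module R B] [IsScalarTower R B B] {φ : A →ₗ[R] B} {x e : A} {l : List A}
    (hφ : PreservesNuProd φ (l.length + 2)) (hstar : ∀ a, φ (star a) = star (φ a)) :
    quasispectrum R (nuProd (φ x) (l.map φ) * φ e) ⊆ quasispectrum R (nuProd x l * e) := by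
  intro r hr hu hq
  refine hr hu ?_
  rw [Units.smul_def, ← neg_smul, ← smul_mul_assoc, ← smul_nuProd] at hq ⊢
  rw [← map_smul]
  exact PreservesNuProd.isQuasiregular_map (φ := φ.toAddMonoidHom) hφ hstar hq

end Multiplicative

theorem odd_nhom_spectrum_subset_general {A B : Type*}
    [NonUnitalNormedRing A] [StarRing A]
    [NormedSpace ℂ A] [IsScalarTower ℂ A A] [SMulCommClass ℂ A A]
    [NonUnitalNormedRing B] [StarRing B] [CStarRing B]
    [NormedSpace ℂ B] [IsScalarTower ℂ B B] [SMulCommClass ℂ B B]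
    (k : ℕ) (hk : 1 ≤ k) (φ : A →ₗ[ℂ] B)
    (hmul : ∀ (x : A) (f : Fin (2 * k) → A),
      φ (nuProd x (List.ofFn f)) = nuProd (φ x) (List.ofFn fun i => φ (f i)))
    (hstar : ∀ a : A, φ (star a) = star (φ a)) :
    ∀ a : A,
      spectrum ℂ (((star (φ a) * φ a : B) : Unitization ℂ B) ^ k) ⊆
        spectrum ℂ (((star a * a : A) : Unitization ℂ A) ^ k) ∪ {0} := by
  intro a
  obtain ⟨m, rfl⟩ : ∃ m, k = m + 1 := ⟨k - 1, by omega⟩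
  have hφ : PreservesNuProd φ ((rep2 m a (star a)).length + 2) := by
    rw [length_rep2]
    exact preservesNuProd_of_ofFn hmul
  rw [← inr_nuProd_rep2_mul, ← inr_nuProd_rep2_mul, ← Unitization.quasispectrum_eq_spectrum_inr,
    ← Unitization.quasispectrum_eq_spectrum_inr, ← hstar, ← map_rep2]
  exact (hφ.quasispectrum_map_subset hstar).trans Set.subset_union_left

/-- For an involutive `n`-homomorphism `φ` between C*-algebras with `n = 2k+1` odd,
`σ((φ(a)*φ(a))^k) ⊆ σ((a*a)^k) ∪ {0}` (spectra in the unitizations). -/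
theorem odd_nhom_spectrum_subset {A B : Type*}
    [NonUnitalNormedRing A] [StarRing A] [CStarRing A] [CompleteSpace A]
    [NormedSpace ℂ A] [IsScalarTower ℂ A A] [SMulCommClass ℂ A A] [StarModule ℂ A]
    [NonUnitalNormedRing B] [StarRing B] [CStarRing B] [CompleteSpace B]
    [NormedSpace ℂ B] [IsScalarTower ℂ B B] [SMulCommClass ℂ B B] [StarModule ℂ B]
    (k : ℕ) (hk : 1 ≤ k) (φ : A →ₗ[ℂ] B)
    (hmul : ∀ (x : A) (f : Fin (2 * k) → A),
      φ (nuProd x (List.ofFn f)) = nuProd (φ x) (List.ofFn fun i => φ (f i)))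
    (hstar : ∀ a : A, φ (star a) = star (φ a)) :
    ∀ a : A,
      spectrum ℂ (((star (φ a) * φ a : B) : Unitization ℂ B) ^ k) ⊆
        spectrum ℂ (((star a * a : A) : Unitization ℂ A) ^ k) ∪ {0} :=
  odd_nhom_spectrum_subset_general k hk φ hmul hstar
end

section
/- Let A be a unital algebra (or ring) and φ : A → B an n-homomorphism. Then e := φ(1) satisfies e^n = e, the map ψ(a) := e^{n-2}φ(a) is an algebra homomorphism, φ(a) = eψ(a) = ψ(a)e for all a, and e commutes with the range of φ. -/
/-!
Adjoining a unit to `B` turns the non-unital products of the statement into monoid powers.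
Taking the factors `b, 1, …, 1` in the `n`-homomorphism identity gives
`φ (a * b) = φ a * φ b * e ^ (n - 2)` with `e = φ 1`. Specialising `b = 1` and `a = 1` gives
`φ a = φ a * e ^ (n - 1) = e * φ a * e ^ (n - 2)`, whence `e` commutes with `φ a`; everything else
is rearranging powers of `e`.
-/

namespace WithOne

variable {S : Type*} [Semigroup S]

lemma coe_nuProd (x : S) (l : List S) :
    ((nuProd x l : S) : WithOne S) = x * (l.map (↑)).prod := by
  induction l generalizing x with
  | nil => simp [nuProd]
  | cons y l ih =>
    simp only [nuProd, List.foldl_cons] at ih ⊢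
    rw [ih, List.map_cons, List.prod_cons, coe_mul, mul_assoc]

lemma coe_foldr_replicate (k : ℕ) (e b : S) :
    (((List.replicate k e).foldr (· * ·) b : S) : WithOne S) = (e : WithOne S) ^ k * b := by
  induction k with
  | zero => simp
  | succ k ih => rw [List.replicate_succ, List.foldr_cons, coe_mul, ih, pow_succ', mul_assoc]

end WithOne

section TwistedMul

variable {A M : Type*} [MulOneClass A] [Monoid M] {f : A → M} {m : ℕ}

lemma apply_eq_apply_mul_apply_one_pow (hf : ∀ a b, f (a * b) = f a * f b * f 1 ^ m) (a : A) :
    f a = f a * f 1 ^ (m + 1) := by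
  simpa [pow_succ', mul_assoc] using hf a 1

lemma commute_apply_one (hf : ∀ a b, f (a * b) = f a * f b * f 1 ^ m) (a : A) :
    Commute (f 1) (f a) :=
  calc f 1 * f a = f 1 * (f a * f 1 ^ (m + 1)) := by
        rw [← apply_eq_apply_mul_apply_one_pow hf]
    _ = f 1 * f a * f 1 ^ m * f 1 := by simp only [pow_succ, mul_assoc]
    _ = f a * f 1 := by rw [← hf, one_mul]

lemma apply_one_pow_add_two (hf : ∀ a b, f (a * b) = f a * f b * f 1 ^ m) :
    f 1 ^ (m + 2) = f 1 :=
  (pow_succ' _ _).trans (apply_eq_apply_mul_apply_one_pow hf 1).symm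

lemma apply_eq_apply_one_pow_mul (hf : ∀ a b, f (a * b) = f a * f b * f 1 ^ m) (a : A) :
    f a = f 1 ^ (m + 1) * f a := by
  rw [((commute_apply_one hf a).pow_left _).eq, ← apply_eq_apply_mul_apply_one_pow hf]

lemma pow_mul_apply_mul (hf : ∀ a b, f (a * b) = f a * f b * f 1 ^ m) (a b : A) :
    f 1 ^ m * f (a * b) = f 1 ^ m * f a * (f 1 ^ m * f b) := by
  rw [hf, ((commute_apply_one hf b).pow_left m).eq]
  simp only [mul_assoc]

end TwistedMul

lemma apply_mul_eq_nuProd_replicate {A B : Type*} [Monoid A] [Mul B] {m : ℕ} (φ : A → B)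
    (hmul : ∀ (x : A) (g : Fin (m + 1) → A),
      φ (x * (List.ofFn g).prod) = nuProd (φ x) (List.ofFn fun i => φ (g i)))
    (a b : A) :
    φ (a * b) = nuProd (φ a) (φ b :: List.replicate m (φ 1)) := by
  simpa [List.ofFn_succ] using hmul a (Fin.cons b fun _ => 1)

theorem unital_nhom_structure_general {A B : Type*}
    [Ring A] [Algebra ℂ A]
    [NonUnitalRing B] [Module ℂ B]
    (n : ℕ) (hn : 2 ≤ n) (φ : A →ₗ[ℂ] B)
    (hmul : ∀ (x : A) (f : Fin (n - 1) → A),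
      φ (x * (List.ofFn f).prod) = nuProd (φ x) (List.ofFn fun i => φ (f i))) :
    let e := φ 1
    let ψ : A → B := fun a => (List.replicate (n - 2) e).foldr (· * ·) (φ a)
    ((List.replicate (n - 1) e).foldr (· * ·) e = e) ∧
    (∀ a b : A, ψ (a * b) = ψ a * ψ b) ∧
    (∀ a : A, φ a = e * ψ a ∧ φ a = ψ a * e) ∧
    (∀ a : A, e * φ a = φ a * e) := by
  obtain ⟨m, rfl⟩ : ∃ m, n = m + 2 := ⟨n - 2, by omega⟩
  intro e ψ
  let F : A → WithOne B := fun a => φ a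
  have hF : ∀ a b, F (a * b) = F a * F b * F 1 ^ m := fun a b => by
    simp [F, apply_mul_eq_nuProd_replicate φ hmul a b, WithOne.coe_nuProd, mul_assoc]
  have hψ : ∀ a, (ψ a : WithOne B) = F 1 ^ m * F a := fun a => WithOne.coe_foldr_replicate _ _ _
  refine ⟨?_, fun a b => ?_, fun a => ⟨?_, ?_⟩, fun a => ?_⟩ <;> apply WithOne.coe_injective
  · rw [WithOne.coe_foldr_replicate, ← pow_succ]
    exact apply_one_pow_add_two hF
  · rw [WithOne.coe_mul, hψ, hψ, hψ]
    exact pow_mul_apply_mul hF a b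
  · rw [WithOne.coe_mul, hψ, ← mul_assoc, ← pow_succ']
    exact apply_eq_apply_one_pow_mul hF a
  · rw [WithOne.coe_mul, hψ, mul_assoc, ← (commute_apply_one hF a).eq, ← mul_assoc, ← pow_succ]
    exact apply_eq_apply_one_pow_mul hF a
  · exact commute_apply_one hF a

/-- If `A` is a unital algebra and `φ : A → B` an `n`-homomorphism, then `e := φ(1)`
is an `n`-potent (`e^n = e`, expressed as a nonunital product), the map
`ψ(a) := e^(n-2) φ(a)` is multiplicative (hence an algebra homomorphism),
`φ(a) = e ψ(a) = ψ(a) e`, and `e` commutes with the range of `φ`. -/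
theorem unital_nhom_structure {A B : Type*}
    [Ring A] [Algebra ℂ A]
    [NonUnitalRing B] [Module ℂ B] [SMulCommClass ℂ B B] [IsScalarTower ℂ B B]
    (n : ℕ) (hn : 2 ≤ n) (φ : A →ₗ[ℂ] B)
    (hmul : ∀ (x : A) (f : Fin (n - 1) → A),
      φ (x * (List.ofFn f).prod) = nuProd (φ x) (List.ofFn fun i => φ (f i))) :
    let e := φ 1
    let ψ : A → B := fun a => (List.replicate (n - 2) e).foldr (· * ·) (φ a)
    ((List.replicate (n - 1) e).foldr (· * ·) e = e) ∧
    (∀ a b : A, ψ (a * b) = ψ a * ψ b) ∧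
    (∀ a : A, φ a = e * ψ a ∧ φ a = ψ a * e) ∧
    (∀ a : A, e * φ a = φ a * e) :=
  unital_nhom_structure_general n hn φ hmul
end

section
/- Let A be a complex algebra and e ∈ A an n-potent (e^n = e), n ≥ 2. Set ω_k = exp(2πi(k−1)/(n−1)) for 1 ≤ k ≤ n−1 and ω₀ = 0. Then there exists a unique n-tuple of pairwise orthogonal idempotents (e₀, e₁, …, e_{n−1}) in the unitization Ã with e₀ + ⋯ + e_{n−1} = 1 and e = Σ_{k=1}^{n−1} ω_k e_k; moreover e₁, …, e_{n−1} lie in A. -/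
/-!
The nodes `ω_j` (`npotentNode n j`) are the distinct roots of `X ^ n - X`, which annihilates
`e`. Hence `e_j := L_j(e)`, with `L_j` the Lagrange basis polynomials of the nodes, is a
partition of unity with `e = Σ ω_j e_j`: every identity between polynomials that holds at all
nodes also holds at `e`. Conversely, for any such partition `p(e) = Σ p(ω_j) e_j` for every
polynomial `p`, and taking `p = L_j` forces `e_j = L_j(e)`. For `j ≠ 0`, `L_j` vanishes at
`ω₀ = 0`, so `L_j(e)` has no scalar part and lies in `A`.
-/

open Polynomial Finset Function

section FunctionalCalculus

variable {R B ι : Type*} [CommSemiring R] [Semiring B] [Algebra R B] [Fintype ι] {q : ι → B}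

theorem OrthogonalIdempotents.sum_smul_mul_sum_smul (hq : OrthogonalIdempotents q)
    (r s : ι → R) :
    (∑ i, r i • q i) * (∑ i, s i • q i) = ∑ i, (r i * s i) • q i := by
  classical
  simp only [sum_mul, mul_sum, smul_mul_smul_comm, hq.mul_eq, smul_ite, smul_zero,
    sum_ite_eq', mem_univ, if_true]

theorem CompleteOrthogonalIdempotents.sum_smul_pow (hq : CompleteOrthogonalIdempotents q)
    (r : ι → R) (k : ℕ) : (∑ i, r i • q i) ^ k = ∑ i, r i ^ k • q i := by
  induction k with
  | zero => simp [hq.complete]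
  | succ k ih =>
    simp only [pow_succ, ih, hq.toOrthogonalIdempotents.sum_smul_mul_sum_smul]

theorem CompleteOrthogonalIdempotents.aeval_sum_smul (hq : CompleteOrthogonalIdempotents q)
    (r : ι → R) (p : R[X]) : aeval (∑ i, r i • q i) p = ∑ i, p.eval (r i) • q i := by
  simp only [aeval_eq_sum_range, eval_eq_sum_range, hq.sum_smul_pow, smul_sum, smul_smul,
    sum_smul]
  exact sum_comm

end FunctionalCalculus

namespace Lagrange

variable {F ι : Type*} [Field F] {s : Finset ι} {v : ι → F}

theorem nodal_dvd (hv : Injective v) {p : F[X]} (hp : ∀ i ∈ s, p.eval (v i) = 0) :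
    nodal s v ∣ p :=
  prod_dvd_of_coprime ((pairwise_coprime_X_sub_C hv).set_pairwise _)
    fun i hi => dvd_iff_isRoot.2 (hp i hi)

theorem nodal_eq_of_monic (hv : Injective v) {p : F[X]} (hp : p.Monic)
    (hdeg : p.natDegree ≤ #s) (hroot : ∀ i ∈ s, p.eval (v i) = 0) : nodal s v = p :=
  (eq_of_monic_of_dvd_of_natDegree_le nodal_monic hp (nodal_dvd hv hroot)
    (hdeg.trans natDegree_nodal.ge)).symm

theorem eval_basis [DecidableEq ι] (hvs : Set.InjOn v s) {i j : ι} (hi : i ∈ s) (hj : j ∈ s) :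
    (Lagrange.basis s v i).eval (v j) = if i = j then 1 else 0 := by
  split_ifs with hij
  · exact hij ▸ eval_basis_self hvs hi
  · exact eval_basis_of_ne hij hj

end Lagrange

section SpectralDecomposition

open Lagrange

variable {F B ι : Type*} [Field F] [Ring B] [Algebra F B] [Fintype ι] {v : ι → F}

theorem CompleteOrthogonalIdempotents.eq_aeval_basis [DecidableEq ι] {q : ι → B}
    (hq : CompleteOrthogonalIdempotents q) (hv : Injective v) (i : ι) :
    q i = aeval (∑ j, v j • q j) (Lagrange.basis univ v i) := by
  simp [hq.aeval_sum_smul, eval_basis hv.injOn (mem_univ i) (mem_univ _)]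

theorem aeval_eq_of_forall_eval_eq {a : B} (ha : aeval a (nodal univ v) = 0) (hv : Injective v)
    {f g : F[X]} (hfg : ∀ i, f.eval (v i) = g.eval (v i)) : aeval a f = aeval a g := by
  obtain ⟨h, hh⟩ := nodal_dvd hv (s := univ) (p := f - g) (by simp [hfg])
  rw [← sub_eq_zero, ← map_sub, hh, map_mul, ha, zero_mul]

variable [DecidableEq ι]

theorem completeOrthogonalIdempotents_aeval_basis {a : B} (ha : aeval a (nodal univ v) = 0)
    (hv : Injective v) :
    CompleteOrthogonalIdempotents fun i => aeval a (Lagrange.basis univ v i) := by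
  have eval_basis' := fun i k => eval_basis hv.injOn (mem_univ i) (mem_univ k)
  refine ⟨⟨fun i => ?_, fun i j hij => ?_⟩, ?_⟩
  · rw [IsIdempotentElem, ← map_mul]
    exact aeval_eq_of_forall_eval_eq ha hv fun k => by simp [eval_basis']
  · change aeval a _ * aeval a _ = 0
    rw [← map_mul, ← map_zero (aeval (R := F) a)]
    exact aeval_eq_of_forall_eval_eq ha hv fun k => by
      obtain rfl | hik := eq_or_ne i k
      · simp [eval_basis', hij.symm]
      · simp [eval_basis', hik]
  · rw [← map_sum, ← map_one (aeval (R := F) a)]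
    exact aeval_eq_of_forall_eval_eq ha hv fun k => by simp [eval_finsetSum, eval_basis']

theorem sum_smul_aeval_basis {a : B} (ha : aeval a (nodal univ v) = 0) (hv : Injective v) :
    ∑ i, v i • aeval a (Lagrange.basis univ v i) = a := by
  simp_rw [← map_smul, ← map_sum]
  conv_rhs => rw [← aeval_X (R := F) a]
  exact aeval_eq_of_forall_eval_eq ha hv fun k => by
    simp [eval_finsetSum, eval_basis hv.injOn (mem_univ _) (mem_univ k)]

theorem existsUnique_completeOrthogonalIdempotents_eq_sum_smul {a : B}
    (ha : aeval a (nodal univ v) = 0) (hv : Injective v) :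
    ∃! q : ι → B, CompleteOrthogonalIdempotents q ∧ a = ∑ i, v i • q i :=
  ⟨_, ⟨completeOrthogonalIdempotents_aeval_basis ha hv, (sum_smul_aeval_basis ha hv).symm⟩,
    fun _ ⟨hq, hqa⟩ => funext fun i => hqa ▸ hq.eq_aeval_basis hv i⟩

end SpectralDecomposition

theorem Unitization.fst_aeval_inr {R A : Type*} [CommRing R] [NonUnitalRing A] [Module R A]
    [IsScalarTower R A A] [SMulCommClass R A A] (p : R[X]) (a : A) :
    (aeval (a : Unitization R A) p).fst = p.eval 0 := by
  rw [← Unitization.fstHom_apply, ← aeval_algHom_apply]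
  simp

section RootsOfUnity

variable {K : Type*} [Field K] {ζ : K} {m : ℕ}

theorem IsPrimitiveRoot.injective_cons_zero_pow (hζ : IsPrimitiveRoot ζ m) (hm : m ≠ 0) :
    Injective (Fin.cons 0 fun i : Fin m => ζ ^ (i : ℕ) : Fin (m + 1) → K) := by
  refine Fin.cons_injective_iff.2 ⟨?_, fun i j hij => Fin.ext (hζ.pow_inj i.2 j.2 hij)⟩
  rintro ⟨i, hi⟩
  exact pow_ne_zero i (hζ.ne_zero hm) hi

theorem IsPrimitiveRoot.nodal_cons_zero_pow (hζ : IsPrimitiveRoot ζ m) (hm : m ≠ 0) :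
    Lagrange.nodal univ (Fin.cons 0 fun i : Fin m => ζ ^ (i : ℕ) : Fin (m + 1) → K) =
      X ^ (m + 1) - X := by
  have hm1 : 1 < m + 1 := by omega
  refine Lagrange.nodal_eq_of_monic (hζ.injective_cons_zero_pow hm)
    (monic_X_pow_sub (by rw [degree_X]; exact_mod_cast hm1)) ?_ fun i _ => ?_
  · rw [natDegree_sub_eq_left_of_natDegree_lt (by simpa using hm1), natDegree_X_pow,
      card_univ, Fintype.card_fin]
  · refine Fin.cases (by simp) (fun i => ?_) i
    simp [← pow_mul, pow_succ, pow_mul', hζ.pow_eq_one]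

end RootsOfUnity

noncomputable def npotentNode (n : ℕ) (j : Fin n) : ℂ :=
  if (j : ℕ) = 0 then (0 : ℂ)
    else Complex.exp (2 * Real.pi * Complex.I * (((j : ℕ) - 1 : ℕ) : ℂ)
      / (((n - 1 : ℕ) : ℂ)))

theorem npotentNode_succ (m : ℕ) :
    npotentNode (m + 1) =
      Fin.cons 0 fun i : Fin m => Complex.exp (2 * Real.pi * Complex.I / m) ^ (i : ℕ) := by
  ext j
  refine Fin.cases (by simp [npotentNode]) (fun i => ?_) j
  simp only [npotentNode, Fin.val_succ, Nat.add_sub_cancel, Fin.cons_succ, Nat.succ_ne_zero,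
    if_false, ← Complex.exp_nat_mul]
  congr 1
  ring

open Complex in
/-- Spectral decomposition of an `n`-potent in a complex algebra: if `e^n = e` then in
the unitization `Ã` there is a unique `n`-partition of unity `(e₀, …, e_{n-1})`
(pairwise orthogonal idempotents summing to `1`) with `e = Σ_{k=1}^{n-1} ω_k e_k`,
where `ω₀ = 0` and `ω_k = exp(2πi(k-1)/(n-1))`; moreover `e₁, …, e_{n-1}` lie in `A`. -/
theorem npotent_partition_of_unity {A : Type*}
    [NonUnitalRing A] [Module ℂ A] [SMulCommClass ℂ A A] [IsScalarTower ℂ A A]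
    (n : ℕ) (hn : 2 ≤ n) (e : A)
    (he : (e : Unitization ℂ A) ^ n = (e : Unitization ℂ A)) :
    (∃! es : Fin n → Unitization ℂ A,
        (∀ j, es j * es j = es j) ∧
        (∀ j k, j ≠ k → es j * es k = 0) ∧
        (∑ j : Fin n, es j) = 1 ∧
        (e : Unitization ℂ A) = ∑ j : Fin n,
          (if (j : ℕ) = 0 then (0 : ℂ)
            else Complex.exp (2 * Real.pi * Complex.I * (((j : ℕ) - 1 : ℕ) : ℂ)
              / (((n - 1 : ℕ) : ℂ)))) • es j) ∧
    (∀ es : Fin n → Unitization ℂ A,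
        ((∀ j, es j * es j = es j) ∧
        (∀ j k, j ≠ k → es j * es k = 0) ∧
        (∑ j : Fin n, es j) = 1 ∧
        (e : Unitization ℂ A) = ∑ j : Fin n,
          (if (j : ℕ) = 0 then (0 : ℂ)
            else Complex.exp (2 * Real.pi * Complex.I * (((j : ℕ) - 1 : ℕ) : ℂ)
              / (((n - 1 : ℕ) : ℂ)))) • es j) →
        ∀ j : Fin n, (j : ℕ) ≠ 0 → ∃ x : A, (x : Unitization ℂ A) = es j) := by
  obtain ⟨m, rfl⟩ : ∃ m, n = m + 1 := ⟨n - 1, by omega⟩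
  have hm : m ≠ 0 := by omega
  have hζ := Complex.isPrimitiveRoot_exp m hm
  have hv : Injective (npotentNode (m + 1)) :=
    npotentNode_succ m ▸ hζ.injective_cons_zero_pow hm
  have ha : aeval (e : Unitization ℂ A) (Lagrange.nodal univ (npotentNode (m + 1))) = 0 := by
    simp [npotentNode_succ, hζ.nodal_cons_zero_pow hm, he]
  refine ⟨?_, fun q ⟨hidem, hortho, hcomplete, hq_sum⟩ j hj => ?_⟩
  · obtain ⟨q, ⟨hq, hq_sum⟩, huniq⟩ :=
      existsUnique_completeOrthogonalIdempotents_eq_sum_smul ha hv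
    refine ⟨q, ⟨hq.idem, hq.ortho, hq.complete, hq_sum⟩, ?_⟩
    rintro q' ⟨hidem, hortho, hcomplete, hq'_sum⟩
    exact huniq q' ⟨⟨⟨hidem, hortho⟩, hcomplete⟩, hq'_sum⟩
  · have hq : CompleteOrthogonalIdempotents q := ⟨⟨hidem, hortho⟩, hcomplete⟩
    have hq_sum' : (e : Unitization ℂ A) = ∑ j, npotentNode (m + 1) j • q j := hq_sum
    have hqj :
        q j = aeval (e : Unitization ℂ A) (Lagrange.basis univ (npotentNode (m + 1)) j) := by
      rw [hq_sum']
      exact hq.eq_aeval_basis hv j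
    have hbasis_zero : (Lagrange.basis univ (npotentNode (m + 1)) j).eval 0 = 0 := by
      simpa [npotentNode] using Lagrange.eval_basis_of_ne (v := npotentNode (m + 1))
        (Fin.ext_iff.not.2 hj) (mem_univ 0)
    refine ⟨(q j).snd, Unitization.ext ?_ rfl⟩
    rw [Unitization.fst_inr, hqj, Unitization.fst_aeval_inr, hbasis_zero]
end

section
/- Let A, B be complex algebras with A unital. A linear map φ : A → B is an n-homomorphism if and only if there exist mutually orthogonal algebra homomorphisms ψ₁, …, ψ_{n−1} : A → B such that φ(a) = Σ_{k=1}^{n−1} ω_k ψ_k(a) for all a, where ω_k = exp(2πi(k−1)/(n−1)). -/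
open Finset

lemma map_nuProd_s12 {B M F : Type*} [Mul B] [Monoid M] [FunLike F B M] [MulHomClass F B M] (f : F)
    (x : B) (l : List B) : f (nuProd x l) = f x * (l.map f).prod := by
  induction l generalizing x with
  | nil => simp [nuProd]
  | cons b l ih =>
    simp only [nuProd, List.foldl_cons, List.map_cons, List.prod_cons] at ih ⊢
    rw [ih, map_mul, mul_assoc]

lemma Finset.sum_range_succ_eq_of_eq {M : Type*} [AddCommMonoid M] [IsCancelAdd M] {f : ℕ → M}
    {m : ℕ} (h : f m = f 0) : ∑ j ∈ range m, f (j + 1) = ∑ j ∈ range m, f j :=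
  add_right_cancel (b := f 0) <| by rw [← sum_range_succ', sum_range_succ, h]

section SpectralProj

variable {K E : Type*} [Field K] [Ring E] [Algebra K E]

/-- For `e ^ (m + 1) = e` and `c ^ m = 1`, the projection onto the `c`-eigenspace of left
multiplication by `e`. -/
def spectralProj (e : E) (m : ℕ) (c : K) : E :=
  (m : K)⁻¹ • ∑ j ∈ range m, (c ^ (j + 1))⁻¹ • e ^ (j + 1)

variable {e : E} {m : ℕ}

lemma Commute.spectralProj_left {b : E} (h : Commute e b) (c : K) :
    Commute (spectralProj e m c) b :=
  ((Commute.sum_left _ _ _ fun _ _ => (h.pow_left _).smul_left _)).smul_left _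

section Periodic

variable (he : e ^ (m + 1) = e) {c : K} (hc : c ^ m = 1)
include he hc

lemma mul_spectralProj : e * spectralProj e m c = c • spectralProj e m c := by
  rcases eq_or_ne m 0 with rfl | hm
  · simp [spectralProj]
  have hc0 : c ≠ 0 := ne_zero_pow hm (hc ▸ one_ne_zero)
  let g : ℕ → E := fun j => (c ^ j)⁻¹ • e ^ j
  have hg : ∀ j, (c ^ (j + 1))⁻¹ • e ^ (j + 1 + 1) = c • g (j + 1 + 1) := fun j => by
    rw [smul_smul, pow_succ c (j + 1), mul_inv, mul_left_comm, mul_inv_cancel₀ hc0, mul_one]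
  have hperiod : g (m + 1) = g 1 := by
    simp only [g]
    rw [pow_succ, hc, one_mul, he, pow_one, pow_one]
  simp only [spectralProj, mul_smul_comm, mul_sum, ← pow_succ', hg, ← smul_sum]
  rw [smul_comm, sum_range_succ_eq_of_eq (f := fun j => g (j + 1)) hperiod]

lemma pow_mul_spectralProj (j : ℕ) :
    e ^ j * spectralProj e m c = c ^ j • spectralProj e m c := by
  induction j with
  | zero => simp
  | succ j ih =>
    rw [pow_succ, mul_assoc, mul_spectralProj he hc, mul_smul_comm, ih, smul_smul, ← pow_succ']

lemma spectralProj_mul (d : K) :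
    spectralProj e m d * spectralProj e m c =
      ((m : K)⁻¹ * ∑ j ∈ range m, (c / d) ^ (j + 1)) • spectralProj e m c := by
  rw [spectralProj, smul_mul_assoc, sum_mul, mul_smul, sum_smul]
  congr 1
  refine sum_congr rfl fun j _ => ?_
  rw [smul_mul_assoc, pow_mul_spectralProj he hc, smul_smul, div_pow, div_eq_inv_mul]

lemma isIdempotentElem_spectralProj [NeZero (m : K)] : IsIdempotentElem (spectralProj e m c) := by
  have hm : m ≠ 0 := fun h => NeZero.ne (m : K) (by simp [h])
  have hc0 : c ≠ 0 := ne_zero_pow hm (hc ▸ one_ne_zero)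
  simp only [IsIdempotentElem, spectralProj_mul he hc, div_self hc0, one_pow, sum_const,
    card_range, nsmul_eq_mul, mul_one, inv_mul_cancel₀ (NeZero.ne (m : K)), one_smul]

lemma spectralProj_mul_of_ne {d : K} (hd : d ^ m = 1) (hdc : d ≠ c) :
    spectralProj e m d * spectralProj e m c = 0 := by
  rcases eq_or_ne m 0 with rfl | hm
  · simp [spectralProj]
  have hx : (c / d) ^ m = 1 := by rw [div_pow, hc, hd, div_one]
  have hx1 : c / d ≠ 1 := by
    rwa [ne_eq, div_eq_one_iff_eq (ne_zero_pow hm (hd ▸ one_ne_zero)), eq_comm]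
  simp only [spectralProj_mul he hc, pow_succ', ← mul_sum, geom_sum_eq hx1, hx, sub_self,
    zero_div, mul_zero, zero_smul]

end Periodic

variable [NeZero (m : K)] {ζ : K} (hζ : IsPrimitiveRoot ζ m)
include hζ

lemma orthogonalIdempotents_spectralProj (he : e ^ (m + 1) = e) :
    OrthogonalIdempotents fun k : Fin m => spectralProj e m (ζ ^ (k : ℕ)) where
  idem k := isIdempotentElem_spectralProj he (by rw [pow_right_comm, hζ.pow_eq_one, one_pow])
  ortho k l hkl := spectralProj_mul_of_ne he (by rw [pow_right_comm, hζ.pow_eq_one, one_pow])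
    (by rw [pow_right_comm, hζ.pow_eq_one, one_pow])
    fun h => hkl (Fin.ext (hζ.pow_inj k.2 l.2 h))

lemma sum_smul_spectralProj :
    ∑ k : Fin m, ζ ^ (k : ℕ) • spectralProj e m (ζ ^ (k : ℕ)) = e := by
  have hm : m ≠ 0 := fun h => NeZero.ne (m : K) (by simp [h])
  have hζ0 : ζ ≠ 0 := hζ.ne_zero hm
  have hcoeff : ∀ k j : ℕ, ζ ^ k * ((ζ ^ k) ^ (j + 1))⁻¹ = ((ζ ^ j)⁻¹) ^ k := fun k j => by
    rw [pow_succ', mul_inv, mul_inv_cancel_left₀ (pow_ne_zero k hζ0), ← pow_mul, mul_comm, pow_mul,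
      inv_pow]
  have horth : ∀ j ∈ range m, j ≠ 0 → ∑ k ∈ range m, ((ζ ^ j)⁻¹) ^ k = 0 := fun j hj hj0 => by
    have hx1 : (ζ ^ j)⁻¹ ≠ 1 :=
      inv_ne_one.2 (hζ.pow_ne_one_of_pos_of_lt hj0 (mem_range.1 hj))
    rw [geom_sum_eq hx1, inv_pow, ← pow_mul, mul_comm, pow_mul, hζ.pow_eq_one, one_pow, inv_one,
      sub_self, zero_div]
  have hterm : ∀ k, ζ ^ k • spectralProj e m (ζ ^ k) =
      (m : K)⁻¹ • ∑ j ∈ range m, ((ζ ^ j)⁻¹) ^ k • e ^ (j + 1) := fun k => by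
    rw [spectralProj, smul_comm, smul_sum]
    simp only [smul_smul, hcoeff]
  rw [Fin.sum_univ_eq_sum_range (fun k => ζ ^ k • spectralProj e m (ζ ^ k)) m]
  simp only [hterm, ← smul_sum]
  rw [sum_comm]
  simp only [← sum_smul]
  rw [sum_eq_single 0 (fun j hj hj0 => by rw [horth j hj hj0, zero_smul])
    (fun h => absurd (mem_range.2 (Nat.pos_of_ne_zero hm)) h)]
  simp [NeZero.ne (m : K)]

end SpectralProj

namespace NonUnitalAlgHom

section MulLeft

variable {R A E : Type*} [CommSemiring R] [NonUnitalNonAssocSemiring A] [Module R A] [Semiring E]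
  [Algebra R E] (ρ : A →ₙₐ[R] E)

def mulLeftOfCommute {p : E} (hp : IsIdempotentElem p) (hρ : ∀ a, Commute p (ρ a)) :
    A →ₙₐ[R] E where
  toFun a := p * ρ a
  map_smul' r a := by rw [map_smul, mul_smul_comm]; rfl
  map_zero' := by rw [map_zero, mul_zero]
  map_add' a b := by rw [map_add, mul_add]
  map_mul' a b := by
    change p * ρ (a * b) = p * ρ a * (p * ρ b)
    rw [map_mul, mul_assoc, ← mul_assoc (ρ a), ← (hρ a).eq, mul_assoc, ← mul_assoc p p, hp.eq]

lemma mulLeftOfCommute_mul {p q : E} (hp : IsIdempotentElem p) (hq : IsIdempotentElem q)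
    (hρp : ∀ a, Commute p (ρ a)) (hρq : ∀ a, Commute q (ρ a)) (a b : A) :
    ρ.mulLeftOfCommute hp hρp a * ρ.mulLeftOfCommute hq hρq b = p * q * ρ (a * b) := by
  change p * ρ a * (q * ρ b) = p * q * ρ (a * b)
  rw [map_mul, mul_assoc, ← mul_assoc (ρ a), ← (hρq a).eq]
  simp only [mul_assoc]

end MulLeft

section UnitizationSnd

variable {R A B : Type*} [CommSemiring R] [NonUnitalNonAssocSemiring A] [Module R A]
  [NonUnitalNonAssocSemiring B] [Module R B]
  (f : A →ₙₐ[R] Unitization R B) (hf : ∀ a, (f a).fst = 0)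

def unitizationSnd : A →ₙₐ[R] B where
  toFun a := (f a).snd
  map_smul' r a := by simp
  map_zero' := by simp
  map_add' a b := by simp
  map_mul' a b := by
    rw [map_mul, Unitization.snd_mul, hf, hf, zero_smul, zero_smul, zero_add, zero_add]

lemma inr_unitizationSnd (a : A) : (f.unitizationSnd hf a : Unitization R B) = f a :=
  Unitization.ext (by simp [hf]) rfl

end UnitizationSnd

end NonUnitalAlgHom

section MulPow

variable {K A E : Type*} [Field K] [Semiring A] [Module K A] [Ring E] [Algebra K E]
  (Φ : A →ₗ[K] E) {m : ℕ} (hΦ : ∀ x a, Φ (x * a) = Φ x * Φ a * Φ 1 ^ m)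
include hΦ

lemma map_one_pow_add_two : Φ 1 ^ (m + 1 + 1) = Φ 1 := by
  rw [pow_succ', pow_succ', ← mul_assoc, ← hΦ, mul_one]

lemma map_mul_map_one_pow_succ (a : A) : Φ a * Φ 1 ^ (m + 1) = Φ a := by
  rw [pow_succ', ← mul_assoc, ← hΦ, mul_one]

lemma map_one_mul_map_mul_pow (a : A) : Φ 1 * (Φ a * Φ 1 ^ m) = Φ a := by
  rw [← mul_assoc, ← hΦ, one_mul]

lemma commute_map_one (a : A) : Commute (Φ 1) (Φ a) :=
  calc Φ 1 * Φ a = Φ 1 * (Φ a * Φ 1 ^ (m + 1)) := by rw [map_mul_map_one_pow_succ Φ hΦ]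
    _ = Φ 1 * (Φ a * Φ 1 ^ m) * Φ 1 := by rw [pow_succ]; simp only [mul_assoc]
    _ = Φ a * Φ 1 := by rw [map_one_mul_map_mul_pow Φ hΦ]

def mulPowHom : A →ₙₐ[K] E where
  toFun a := Φ a * Φ 1 ^ m
  map_smul' r a := by rw [map_smul, smul_mul_assoc]; rfl
  map_zero' := by rw [map_zero, zero_mul]
  map_add' a b := by rw [map_add, add_mul]
  map_mul' a b := by
    change Φ (a * b) * Φ 1 ^ m = Φ a * Φ 1 ^ m * (Φ b * Φ 1 ^ m)
    simp only [hΦ, mul_assoc]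
    rw [← mul_assoc (Φ 1 ^ m) (Φ b), ((commute_map_one Φ hΦ b).pow_left m).eq, mul_assoc]

lemma commute_map_one_mulPowHom (a : A) : Commute (Φ 1) (mulPowHom Φ hΦ a) :=
  (commute_map_one Φ hΦ a).mul_right (Commute.self_pow _ _)

variable {ζ : K} (hζ : IsPrimitiveRoot ζ (m + 1))

def spectralComponent (k : Fin (m + 1)) : A →ₙₐ[K] E :=
  haveI := hζ.neZero'
  (mulPowHom Φ hΦ).mulLeftOfCommute
    ((orthogonalIdempotents_spectralProj hζ (map_one_pow_add_two Φ hΦ)).idem k)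
    fun a => (commute_map_one_mulPowHom Φ hΦ a).spectralProj_left _

lemma spectralComponent_apply (k : Fin (m + 1)) (a : A) :
    spectralComponent Φ hΦ hζ k a = spectralProj (Φ 1) (m + 1) (ζ ^ (k : ℕ)) * (Φ a * Φ 1 ^ m) :=
  rfl

lemma spectralComponent_mul_of_ne {k l : Fin (m + 1)} (hkl : k ≠ l) (a b : A) :
    spectralComponent Φ hΦ hζ k a * spectralComponent Φ hΦ hζ l b = 0 := by
  have := hζ.neZero'
  rw [spectralComponent, spectralComponent, NonUnitalAlgHom.mulLeftOfCommute_mul,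
    (orthogonalIdempotents_spectralProj hζ (map_one_pow_add_two Φ hΦ)).ortho hkl, zero_mul]

lemma sum_smul_spectralComponent (a : A) :
    ∑ k : Fin (m + 1), ζ ^ (k : ℕ) • spectralComponent Φ hΦ hζ k a = Φ a := by
  have := hζ.neZero'
  simp only [spectralComponent_apply, ← smul_mul_assoc, ← sum_mul,
    sum_smul_spectralProj hζ, map_one_mul_map_mul_pow Φ hΦ]

end MulPow

lemma map_mul_eq_of_nuProd {A B M F : Type*} [Monoid A] [Mul B] [Monoid M] [FunLike F B M]
    [MulHomClass F B M] (ι : F) {m : ℕ} {φ : A → B}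
    (hφ : ∀ (x : A) (f : Fin (m + 1) → A),
      φ (x * (List.ofFn f).prod) = nuProd (φ x) (List.ofFn fun i => φ (f i))) (x a : A) :
    ι (φ (x * a)) = ι (φ x) * ι (φ a) * ι (φ 1) ^ m := by
  have := congrArg ι (hφ x (Fin.cons a fun _ => 1))
  simpa [List.ofFn_succ, map_nuProd_s12, mul_assoc] using this

theorem exists_orthogonal_decomposition {K A B : Type*} [Field K] [Semiring A] [Module K A]
    [NonUnitalRing B] [Module K B] [SMulCommClass K B B] [IsScalarTower K B B]
    {m : ℕ} {ζ : K} (hζ : IsPrimitiveRoot ζ (m + 1)) (φ : A →ₗ[K] B)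
    (hφ : ∀ (x : A) (f : Fin (m + 1) → A),
      φ (x * (List.ofFn f).prod) = nuProd (φ x) (List.ofFn fun i => φ (f i))) :
    ∃ ψ : Fin (m + 1) → (A →ₙₐ[K] B),
      (∀ i j, i ≠ j → ∀ a b : A, ψ i a * ψ j b = 0 ∧ ψ j b * ψ i a = 0) ∧
      ∀ a : A, φ a = ∑ k : Fin (m + 1), ζ ^ (k : ℕ) • ψ k a := by
  let ι := Unitization.inrNonUnitalAlgHom K B
  let Φ : A →ₗ[K] Unitization K B := (ι : B →ₗ[K] Unitization K B) ∘ₗ φ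
  have hΦ : ∀ x a, Φ (x * a) = Φ x * Φ a * Φ 1 ^ m := map_mul_eq_of_nuProd ι hφ
  have hfst : ∀ k a, (spectralComponent Φ hΦ hζ k a).fst = 0 := by
    simp [spectralComponent_apply, Φ, ι]
  let ψ : Fin (m + 1) → A →ₙₐ[K] B := fun k =>
    (spectralComponent Φ hΦ hζ k).unitizationSnd (hfst k)
  have hψ : ∀ k a, (ψ k a : Unitization K B) = spectralComponent Φ hΦ hζ k a :=
    fun k => NonUnitalAlgHom.inr_unitizationSnd _ (hfst k)
  refine ⟨ψ, fun i j hij a b => ⟨?_, ?_⟩, fun a => Unitization.inr_injective (R := K) ?_⟩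
  · apply Unitization.inr_injective (R := K)
    rw [Unitization.inr_mul, hψ, hψ, spectralComponent_mul_of_ne Φ hΦ hζ hij, Unitization.inr_zero]
  · apply Unitization.inr_injective (R := K)
    rw [Unitization.inr_mul, hψ, hψ, spectralComponent_mul_of_ne Φ hΦ hζ hij.symm,
      Unitization.inr_zero]
  · change Φ a = ι (∑ k : Fin (m + 1), ζ ^ (k : ℕ) • ψ k a)
    rw [map_sum, ← sum_smul_spectralComponent Φ hΦ hζ a]
    simp only [map_smul]
    exact sum_congr rfl fun k _ => by rw [← hψ]; rfl

section OrthogonalSum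

variable {ι R B : Type*} [Fintype ι] [CommSemiring R] [NonUnitalNonAssocSemiring B] [Module R B]
  [SMulCommClass R B B] [IsScalarTower R B B]

lemma sum_smul_mul_sum_smul {A : Type*} [NonUnitalNonAssocSemiring A] [Module R A]
    (ψ : ι → A →ₙₐ[R] B) (hψ : ∀ i j, i ≠ j → ∀ a b, ψ i a * ψ j b = 0) (c d : ι → R) (x a : A) :
    (∑ i, d i • ψ i x) * (∑ i, c i • ψ i a) = ∑ i, (d i * c i) • ψ i (x * a) := by
  rw [sum_mul_sum]
  refine sum_congr rfl fun i _ => ?_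
  rw [sum_eq_single i (fun j _ hji => by rw [smul_mul_smul_comm, hψ i j hji.symm, smul_zero])
    (fun h => absurd (mem_univ i) h), smul_mul_smul_comm, map_mul]

variable {A : Type*} [Semiring A] [Module R A] (ψ : ι → A →ₙₐ[R] B)
  (hψ : ∀ i j, i ≠ j → ∀ a b, ψ i a * ψ j b = 0) (c : ι → R) (φ : A → B)
  (hφ : ∀ a, φ a = ∑ i, c i • ψ i a)
include hψ hφ

lemma nuProd_map_sum_smul (d : ι → R) (x : A) (l : List A) :
    nuProd (∑ i, d i • ψ i x) (l.map φ) = ∑ i, (d i * c i ^ l.length) • ψ i (x * l.prod) := by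
  induction l generalizing d x with
  | nil => simp [nuProd]
  | cons a l ih =>
    change nuProd ((∑ i, d i • ψ i x) * φ a) _ = _
    rw [hφ, sum_smul_mul_sum_smul ψ hψ, ih]
    simp only [List.length_cons, List.prod_cons, pow_succ', mul_assoc]

theorem nuProd_eq_of_orthogonal {m : ℕ} (hc : ∀ i, c i ^ (m + 1) = c i) (x : A) (f : Fin m → A) :
    φ (x * (List.ofFn f).prod) = nuProd (φ x) (List.ofFn fun i => φ (f i)) := by
  have hmap : (List.ofFn fun i => φ (f i)) = (List.ofFn f).map φ := List.map_ofFn.symm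
  rw [hmap, hφ x, nuProd_map_sum_smul ψ hψ c φ hφ, hφ, List.length_ofFn]
  simp only [← pow_succ', hc]

end OrthogonalSum

/-- For `A` a unital complex algebra, a linear map `φ : A → B` is an `n`-homomorphism
iff there are mutually orthogonal algebra homomorphisms `ψ₁, …, ψ_{n-1}` with
`φ(a) = Σ_{k=1}^{n-1} ω_k ψ_k(a)`, where `ω_k = exp(2πi(k-1)/(n-1))`. -/
theorem nhom_iff_orthogonal_decomposition {A B : Type*}
    [Ring A] [Algebra ℂ A]
    [NonUnitalRing B] [Module ℂ B] [SMulCommClass ℂ B B] [IsScalarTower ℂ B B]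
    (n : ℕ) (hn : 2 ≤ n) (φ : A →ₗ[ℂ] B) :
    (∀ (x : A) (f : Fin (n - 1) → A),
      φ (x * (List.ofFn f).prod) = nuProd (φ x) (List.ofFn fun i => φ (f i))) ↔
    (∃ ψ : Fin (n - 1) → (A →ₙₐ[ℂ] B),
      (∀ i j, i ≠ j → ∀ a b : A, ψ i a * ψ j b = 0 ∧ ψ j b * ψ i a = 0) ∧
      (∀ a : A, φ a = ∑ k : Fin (n - 1),
        Complex.exp (2 * Real.pi * Complex.I * ((k : ℕ) : ℂ) / (((n - 1 : ℕ) : ℂ)))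
          • ψ k a)) := by
  obtain ⟨m, hm⟩ : ∃ m, n - 1 = m + 1 := ⟨n - 2, by omega⟩
  have hζ := Complex.isPrimitiveRoot_exp (m + 1) m.succ_ne_zero
  set ζ := Complex.exp (2 * Real.pi * Complex.I / (m + 1 : ℕ))
  have hexp : ∀ k : ℕ,
      Complex.exp (2 * Real.pi * Complex.I * (k : ℂ) / ((m + 1 : ℕ) : ℂ)) = ζ ^ k := fun k => by
    rw [← Complex.exp_nat_mul]; ring_nf
  rw [hm]
  simp only [hexp]
  refine ⟨exists_orthogonal_decomposition hζ φ, fun ⟨ψ, horth, hsum⟩ =>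
    nuProd_eq_of_orthogonal ψ (fun i j hij a b => (horth i j hij a b).1) _ φ hsum (fun k => ?_)⟩
  rw [pow_succ, pow_right_comm, hζ.pow_eq_one, one_pow, one_mul]
end

section
/- Let φ : A → B be an involutive n-homomorphism of C*-algebras and 1 ≤ k ≤ n. If a₁⋯a_k = b₁⋯b_k in A, then φ(a₁)⋯φ(a_k) = φ(b₁)⋯φ(b_k) in B (Coherent Factorization Lemma). -/
/-!
Downward induction on the length of the products. Suppose `φ` identifies equal products of
length `m + 1` and `a₁⋯a_m = b₁⋯b_m`. Appending any `c` gives equal products of length `m + 1`,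
so `d := φ(a₁)⋯φ(a_m) - φ(b₁)⋯φ(b_m)` satisfies `d φ(c) = 0` for every `c`. As `φ` commutes
with the involution, this means `d` kills the adjoint of every product of elements of the image of `φ`,
in particular `d d* = 0`, whence `d = 0` by the C*-identity.
-/

section

variable {A B : Type*}

theorem nuProd_append_singleton [Mul A] (x : A) (l : List A) (a : A) :
    nuProd x (l ++ [a]) = nuProd x l * a := by
  simp [nuProd]

theorem nuProd_ofFn_snoc [Mul A] {m : ℕ} (x : A) (f : Fin m → A) (a : A) :
    nuProd x (List.ofFn (Fin.snoc f a)) = nuProd x (List.ofFn f) * a := by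
  rw [List.ofFn_succ', List.concat_eq_append, nuProd_append_singleton]
  simp

theorem mul_star_nuProd_eq_zero [SemigroupWithZero B] [StarMul B] {d z : B} {l : List B}
    {s : Set B} (hs : ∀ b ∈ s, d * star b = 0) (hz : z ∈ s) (hl : ∀ b ∈ l, b ∈ s) :
    d * star (nuProd z l) = 0 := by
  rcases l.eq_nil_or_concat with rfl | ⟨l, b, rfl⟩
  · exact hs z hz
  · rw [List.concat_eq_append, nuProd_append_singleton, star_mul, ← mul_assoc,
      hs b (hl b (by simp)), zero_mul]

def PreservesEqualProducts [Mul A] [Mul B] (φ : A → B) (m : ℕ) : Prop :=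
  ∀ (x y : A) (f g : Fin m → A), nuProd x (List.ofFn f) = nuProd y (List.ofFn g) →
    nuProd (φ x) (List.ofFn (φ ∘ f)) = nuProd (φ y) (List.ofFn (φ ∘ g))

theorem preservesEqualProducts_of_map_nuProd [Mul A] [Mul B] {φ : A → B} {m : ℕ}
    (hmul : ∀ (x : A) (f : Fin m → A),
      φ (nuProd x (List.ofFn f)) = nuProd (φ x) (List.ofFn (φ ∘ f))) :
    PreservesEqualProducts φ m := by
  intro x y f g h
  rw [← hmul, ← hmul, h]

variable [Mul A] [Star A] [NonUnitalNormedRing B] [StarRing B] [CStarRing B] {φ : A → B}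

theorem PreservesEqualProducts.of_succ (hstar : ∀ a, φ (star a) = star (φ a)) {m : ℕ}
    (h : PreservesEqualProducts φ (m + 1)) : PreservesEqualProducts φ m := by
  intro x y f g hxy
  set P := nuProd (φ x) (List.ofFn (φ ∘ f))
  set Q := nuProd (φ y) (List.ofFn (φ ∘ g))
  have hann : ∀ b ∈ Set.range φ, (P - Q) * star b = 0 := by
    rintro _ ⟨a, rfl⟩
    have hPQ := h x y (Fin.snoc f (star a)) (Fin.snoc g (star a))
      (by rw [nuProd_ofFn_snoc, nuProd_ofFn_snoc, hxy])
    rw [Fin.comp_snoc, Fin.comp_snoc, nuProd_ofFn_snoc, nuProd_ofFn_snoc] at hPQ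
    rw [← hstar, sub_mul, hPQ, sub_self]
  have hmem : ∀ k : Fin m → A, ∀ b ∈ List.ofFn (φ ∘ k), b ∈ Set.range φ :=
    fun k b hb => Set.range_comp_subset_range k φ ((List.mem_ofFn' _ b).mp hb)
  have hself : (P - Q) * star (P - Q) = 0 := by
    rw [star_sub, mul_sub, mul_star_nuProd_eq_zero hann ⟨x, rfl⟩ (hmem f),
      mul_star_nuProd_eq_zero hann ⟨y, rfl⟩ (hmem g), sub_zero]
  exact sub_eq_zero.mp ((CStarRing.mul_star_self_eq_zero_iff _).mp hself)

theorem PreservesEqualProducts.of_le (hstar : ∀ a, φ (star a) = star (φ a)) {m N : ℕ}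
    (hmN : m ≤ N) (h : PreservesEqualProducts φ N) : PreservesEqualProducts φ m :=
  Nat.decreasingInduction (fun _ _ => of_succ hstar) h hmN

end

theorem coherent_factorization_general {A B : Type*}
    [NonUnitalNormedRing A] [StarRing A] [NormedSpace ℂ A]
    [NonUnitalNormedRing B] [StarRing B] [CStarRing B] [NormedSpace ℂ B]
    (n : ℕ) (φ : A →ₗ[ℂ] B)
    (hmul : ∀ (x : A) (f : Fin (n - 1) → A),
      φ (nuProd x (List.ofFn f)) = nuProd (φ x) (List.ofFn fun i => φ (f i)))
    (hstar : ∀ a : A, φ (star a) = star (φ a)) :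
    ∀ (k : ℕ), 1 ≤ k → k ≤ n →
      ∀ (x y : A) (f g : Fin (k - 1) → A),
        nuProd x (List.ofFn f) = nuProd y (List.ofFn g) →
        nuProd (φ x) (List.ofFn fun i => φ (f i))
          = nuProd (φ y) (List.ofFn fun i => φ (g i)) := by
  intro k _ hkn
  exact PreservesEqualProducts.of_le hstar (Nat.sub_le_sub_right hkn 1)
    (preservesEqualProducts_of_map_nuProd hmul)

/-- Coherent Factorization Lemma: if `φ : A → B` is an involutive `n`-homomorphism of
C*-algebras and `1 ≤ k ≤ n`, then `a₁⋯a_k = b₁⋯b_k` implies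
`φ(a₁)⋯φ(a_k) = φ(b₁)⋯φ(b_k)`. -/
theorem coherent_factorization {A B : Type*}
    [NonUnitalNormedRing A] [StarRing A] [CStarRing A] [CompleteSpace A]
    [NormedSpace ℂ A] [IsScalarTower ℂ A A] [SMulCommClass ℂ A A] [StarModule ℂ A]
    [NonUnitalNormedRing B] [StarRing B] [CStarRing B] [CompleteSpace B]
    [NormedSpace ℂ B] [IsScalarTower ℂ B B] [SMulCommClass ℂ B B] [StarModule ℂ B]
    (n : ℕ) (hn : 2 ≤ n) (φ : A →ₗ[ℂ] B)
    (hmul : ∀ (x : A) (f : Fin (n - 1) → A),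
      φ (nuProd x (List.ofFn f)) = nuProd (φ x) (List.ofFn fun i => φ (f i)))
    (hstar : ∀ a : A, φ (star a) = star (φ a)) :
    ∀ (k : ℕ), 1 ≤ k → k ≤ n →
      ∀ (x y : A) (f g : Fin (k - 1) → A),
        nuProd x (List.ofFn f) = nuProd y (List.ofFn g) →
        nuProd (φ x) (List.ofFn fun i => φ (f i))
          = nuProd (φ y) (List.ofFn fun i => φ (g i)) :=
  coherent_factorization_general n φ hmul hstar
end
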